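/- arXiv:1502.04141 — 3 statements merged into one kernel-verified Lean document; each statement's English description precedes it below -/
import Mathlib

section
/- Let $V$ be an elementary abelian $2$-group, let $D$ be the dihedral group of order $2(2n+1)$, and let $K : V \to D$ be a group homomorphism taking values in the subgroup $\{e, s\}$ generated by a reflection $s$, with $K$ not the trivial homomorphism. Then the stabilizer of the function $v \mapsto K(v)$ under the action of $V \times D \times D$ on $D^V$ given by $((u, g_p, g_q) \cdot \bar g)(v) = g_p \bar g(u+v) g_q^{-1}$ is exactly $\{(u, g_p, g_p K(u)) \mid u \in V,\ g_p \in \{e, s\}\}$. -/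
open DihedralGroup

lemma odd_halve (n : ℕ) (i : ZMod (2 * n + 1)) (h : i + i = 0) : i = 0 := by
  have hc : ((2 * n + 1 : ℕ) : ZMod (2 * n + 1)) = 0 := ZMod.natCast_self _
  push_cast at hc
  have h2 : ((n : ZMod (2 * n + 1)) + 1) * (i + i) = i := by linear_combination i * hc
  rw [h, mul_zero] at h2
  exact h2.symm

lemma comm_with_s (n : ℕ) (g : DihedralGroup (2 * n + 1))
    (h : g * sr 0 = sr 0 * g) : g ∈ ({1, sr 0} : Set (DihedralGroup (2 * n + 1))) := by
  cases g with
  | r i =>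
    rw [r_mul_sr, sr_mul_r, zero_add, zero_sub] at h
    have : i = 0 := odd_halve n i (by
      have := sr.inj h
      linear_combination -this)
    left; rw [this, one_def]
  | sr i =>
    rw [sr_mul_sr, sr_mul_sr, sub_zero, zero_sub] at h
    have : i = 0 := odd_halve n i (by
      have := r.inj h
      linear_combination -this)
    right; rw [this]; rfl

/-- For a nontrivial homomorphism `K` from an elementary abelian 2-group `V`
to the dihedral group `D` of order `2(2n+1)` with values in `{1, s}` where
`s = sr 0`, the stabilizer of `v ↦ K v` under the action
`((u, gp, gq) · ḡ)(v) = gp * ḡ(u+v) * gq⁻¹` of `V × D × D` on `D^V`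
is exactly `{(u, gp, gp * K u) | u ∈ V, gp ∈ {1, s}}`. -/
theorem stabilizer_of_hom (n : ℕ) (V : Type*) [AddCommGroup V] [Fintype V]
    (h2 : ∀ v : V, v + v = 0)
    (K : V → DihedralGroup (2 * n + 1))
    (hK0 : K 0 = 1) (hKadd : ∀ u v, K (u + v) = K u * K v)
    (hKval : ∀ v, K v ∈ ({1, DihedralGroup.sr 0} : Set (DihedralGroup (2 * n + 1))))
    (hKnontriv : ∃ v, K v ≠ 1) :
    {t : V × DihedralGroup (2 * n + 1) × DihedralGroup (2 * n + 1) |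
        (fun v => t.2.1 * K (t.1 + v) * t.2.2⁻¹) = K}
      = {t : V × DihedralGroup (2 * n + 1) × DihedralGroup (2 * n + 1) |
          t.2.1 ∈ ({1, DihedralGroup.sr 0} : Set (DihedralGroup (2 * n + 1))) ∧
          t.2.2 = t.2.1 * K t.1} := by
  have hsq : ∀ v, K v * K v = 1 := by
    intro v
    rcases hKval v with h | h <;> rw [h]
    · simp
    · exact sr_mul_self 0
  ext ⟨u, gp, gq⟩
  simp only [Set.mem_setOf_eq]
  constructor
  · intro h
    have h0 := congrFun h 0
    simp only [add_zero, hK0] at h0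
    have hgq : gq = gp * K u := by
      have := mul_eq_one_iff_eq_inv.mp h0
      rw [this]; simp
    obtain ⟨w, hw⟩ := hKnontriv
    have hKw : K w = sr 0 := (hKval w).resolve_left hw
    have hv := congrFun h w
    rw [hKadd, hgq, mul_inv_rev] at hv
    -- gp * (K u * K w) * ((K u)⁻¹ * gp⁻¹) = K w
    have hKuinv : (K u)⁻¹ = K u := by
      rcases hKval u with h' | h' <;> rw [h']
      · simp
      · rw [inv_eq_iff_mul_eq_one]; exact sr_mul_self 0
    have hcomm : K u * K w = K w * K u := by
      rcases hKval u with h' | h' <;> rw [h', hKw] <;> simp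
    rw [hKuinv, hcomm] at hv
    have key : gp * (K w * K u) * (K u * gp⁻¹) = gp * K w * gp⁻¹ := by
      rw [show gp * (K w * K u) * (K u * gp⁻¹) = gp * K w * (K u * K u) * gp⁻¹ by group,
        hsq u, mul_one]
    rw [key] at hv
    have hv' : gp * K w = K w * gp := mul_inv_eq_iff_eq_mul.mp hv
    rw [hKw] at hv'
    exact ⟨comm_with_s n gp hv', hgq⟩
  · rintro ⟨hgp, rfl⟩
    funext v
    rw [hKadd, mul_inv_rev]
    have hKuinv : (K u)⁻¹ = K u := by
      rcases hKval u with h' | h' <;> rw [h']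
      · simp
      · rw [inv_eq_iff_mul_eq_one]; exact sr_mul_self 0
    have hcomm : K u * K v = K v * K u := by
      rcases hKval u with h' | h' <;> rcases hKval v with h'' | h'' <;> rw [h', h''] <;> simp
    have hgcomm : gp * K v = K v * gp := by
      rcases hgp with h' | h' <;> rcases hKval v with h'' | h'' <;> rw [h', h''] <;> simp
    calc gp * (K u * K v) * ((K u)⁻¹ * gp⁻¹)
        = gp * (K v * (K u * K u)) * gp⁻¹ := by rw [hKuinv, hcomm]; group
      _ = gp * K v * gp⁻¹ := by rw [hsq u]; group
      _ = K v := by rw [hgcomm]; group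
end

section
/- Let $n_1, \ldots, n_k$ be natural numbers. The multinomial coefficient $\frac{(n_1 + \cdots + n_k)!}{n_1! \cdots n_k!}$ is odd if and only if for all $i \neq j$ the binary expansions of $n_i$ and $n_j$ have no $1$ in common (i.e., the bitwise AND of $n_i$ and $n_j$ is zero for all $i \neq j$). -/
/-!
By Lucas's theorem at `p = 2`, `(m + n).choose m` is odd exactly when adding `m` and `n` in
base 2 produces no carry, i.e. when `m &&& n = 0`, and then `m + n = m ||| n`. Splitting off one
member `a` of the family,
`multinomial (insert a s) f = (f a + ∑ s f).choose (f a) * multinomial s f`, so by induction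
it is odd iff `f a &&& ∑ s f = 0` and the family is pairwise disjoint on `s`.
For a pairwise bitwise-disjoint family, being disjoint from the sum means being disjoint from
each member.
-/

namespace Nat

theorem add_eq_lor_of_land_eq_zero {a b : ℕ} (h : a &&& b = 0) : a + b = a ||| b := by
  induction a using Nat.strong_induction_on generalizing b with
  | _ a ih =>
    rcases Nat.eq_zero_or_pos a with rfl | ha
    · simp
    have hhalf : a / 2 + b / 2 = a / 2 ||| b / 2 :=
      ih (a / 2) (by omega) (by rw [← Nat.and_div_two, h])
    have hlow : ¬(a % 2 = 1 ∧ b % 2 = 1) := by rw [← Nat.and_mod_two_eq_one, h]; simp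
    have hmod : (a ||| b) % 2 = a % 2 + b % 2 := by
      have := Nat.or_mod_two_eq_one (a := a) (b := b); omega
    have := Nat.div_add_mod (a ||| b) 2
    rw [Nat.or_div_two, ← hhalf, hmod] at this
    omega

theorem land_add_eq_zero_iff {x a b : ℕ} (h : a &&& b = 0) :
    x &&& (a + b) = 0 ↔ x &&& a = 0 ∧ x &&& b = 0 := by
  rw [add_eq_lor_of_land_eq_zero h, Nat.and_or_distrib_left, Nat.or_eq_zero_iff]

theorem land_sum_eq_zero_iff {ι : Type*} {s : Finset ι} {f : ι → ℕ}
    (hs : (s : Set ι).Pairwise fun i j => f i &&& f j = 0) (x : ℕ) :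
    x &&& ∑ i ∈ s, f i = 0 ↔ ∀ i ∈ s, x &&& f i = 0 := by
  classical
  induction s using Finset.induction_on generalizing x with
  | empty => simp
  | insert a s ha ih =>
    rw [Finset.coe_insert, Set.pairwise_insert_of_notMem ha] at hs
    have hdisj : f a &&& ∑ i ∈ s, f i = 0 := (ih hs.1 (f a)).2 fun j hj => (hs.2 j hj).1
    rw [Finset.sum_insert ha, land_add_eq_zero_iff hdisj, ih hs.1, Finset.forall_mem_insert]

theorem odd_choose_iff_odd_choose_mod_two_and_div_two {n k : ℕ} :
    Odd (n.choose k) ↔ Odd ((n % 2).choose (k % 2)) ∧ Odd ((n / 2).choose (k / 2)) := by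
  have : Fact (Nat.Prime 2) := ⟨Nat.prime_two⟩
  rw [← Nat.odd_mul, Nat.odd_iff, Nat.odd_iff, Choose.choose_modEq_choose_mod_mul_choose_div_nat]

theorem odd_choose_add_iff (m n : ℕ) : Odd ((m + n).choose m) ↔ m &&& n = 0 := by
  induction m using Nat.strong_induction_on generalizing n with
  | _ m ih =>
    rcases Nat.eq_zero_or_pos m with rfl | hm
    · simp
    rw [odd_choose_iff_odd_choose_mod_two_and_div_two]
    by_cases hcarry : m % 2 = 1 ∧ n % 2 = 1
    · have hlow : ((m + n) % 2).choose (m % 2) = 0 := by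
        rw [show (m + n) % 2 = 0 by omega, hcarry.1]; rfl
      have hne : m &&& n ≠ 0 := by
        have := Nat.and_mod_two_eq_one.2 hcarry; omega
      simp [hlow, hne]
    · have hlow : ((m + n) % 2).choose (m % 2) = 1 := by
        rcases Nat.mod_two_eq_zero_or_one m with h | h
        · rw [h, Nat.choose_zero_right]
        · rw [h, show (m + n) % 2 = 1 by omega]; rfl
      have hbit : (m &&& n) % 2 = 0 := by
        have := Nat.and_mod_two_eq_one (a := m) (b := n); omega
      rw [hlow, show (m + n) / 2 = m / 2 + n / 2 by omega, ih (m / 2) (by omega),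
        ← Nat.and_div_two]
      simp only [odd_one, true_and]
      omega

end Nat

theorem multinomial_odd_iff_general (ι : Type*) (s : Finset ι) (f : ι → ℕ) :
    Odd (Nat.multinomial s f) ↔ ∀ i ∈ s, ∀ j ∈ s, i ≠ j → f i &&& f j = 0 := by
  classical
  show _ ↔ (s : Set ι).Pairwise fun i j => f i &&& f j = 0
  induction s using Finset.induction_on with
  | empty => simp
  | insert a s ha ih =>
    rw [Nat.multinomial_insert ha, Nat.odd_mul, Nat.odd_choose_add_iff, ih, Finset.coe_insert,
      Set.pairwise_insert_of_notMem ha, and_comm]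
    simp only [Nat.land_comm (f _) (f a), and_self]
    exact and_congr_right fun hs => Nat.land_sum_eq_zero_iff hs (f a)

/-- The multinomial coefficient of a finite family is odd iff the members of
the family pairwise share no 1 in their binary expansions. -/
theorem multinomial_odd_iff (ι : Type*) [DecidableEq ι] (s : Finset ι) (f : ι → ℕ) :
    Odd (Nat.multinomial s f) ↔ ∀ i ∈ s, ∀ j ∈ s, i ≠ j → f i &&& f j = 0 :=
  multinomial_odd_iff_general ι s f
end

section
/- For all natural numbers $n_1, n_2 \geq 0$, one has $\sum_{i=1}^{n_1+1} \binom{n_1+n_2+3}{i} \equiv 1 + \binom{n_1+n_2+2}{n_1+1} \pmod{2}$. -/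
/-!
In characteristic 2 the signs in the alternating partial sum
`∑_{i ≤ k} (-1)^i C(n+1, i) = (-1)^k C(n, k)` disappear; removing the term `i = 0`
and taking `n = n₁ + n₂ + 2`, `k = n₁ + 1` gives the congruence.
-/

open Finset

theorem CharTwo.sum_range_choose_succ {R : Type*} [Ring R] [CharP R 2] (n k : ℕ) :
    ∑ i ∈ range (k + 1), ((n + 1).choose i : R) = n.choose k := by
  have h := congrArg (Int.cast : ℤ → R)
    (Int.alternating_sum_range_choose_eq_choose (n := n) (m := k))
  push_cast at h
  simpa [CharTwo.neg_eq] using h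

theorem CharTwo.sum_Icc_one_choose_succ {R : Type*} [Ring R] [CharP R 2] (n k : ℕ) :
    ∑ i ∈ Icc 1 k, ((n + 1).choose i : R) = 1 + n.choose k := by
  rw [← CharTwo.sum_range_choose_succ, range_eq_Ico, Ico_add_one_right_eq_Icc,
    ← insert_Icc_add_one_left_eq_Icc k.zero_le, sum_insert (by simp)]
  simp

/-- `∑_{i=1}^{n₁+1} (n₁+n₂+3 choose i) ≡ 1 + (n₁+n₂+2 choose n₁+1) (mod 2)`. -/
theorem sum_choose_congr (n₁ n₂ : ℕ) :
    (∑ i ∈ Finset.Icc 1 (n₁ + 1), Nat.choose (n₁ + n₂ + 3) i) % 2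
      = (1 + Nat.choose (n₁ + n₂ + 2) (n₁ + 1)) % 2 := by
  rw [← ZMod.natCast_eq_natCast_iff']
  push_cast
  exact CharTwo.sum_Icc_one_choose_succ (n₁ + n₂ + 2) (n₁ + 1)
end
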